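/- Let A and B be quasi-categories and f : A → B a simplicial map. Then f is a categorical equivalence (isomorphism in sSet^{τ₀}) if and only if f is a weak categorical equivalence, i.e., the induced map τ₀(X^B) → τ₀(X^A) is a bijection for every simplicial set X... in particular every categorical equivalence between arbitrary simplicial sets is a weak categorical equivalence. -/

import Mathlib

open CategoryTheory Simplicial SSet MonoidalCategory Opposite

universe u

def SSet.Vert (X : SSet.{u}) : Type u := X _⦋0⦌

instance SSet.vertQuiver (X : SSet.{u}) : Quiver (SSet.Vert X) :=
  ⟨fun x y => { e : X _⦋1⦌ // X.δ 1 e = x ∧ X.δ 0 e = y }⟩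

inductive SSet.FundRel (X : SSet.{u}) : HomRel (Paths (SSet.Vert X)) where
  | degen (x : SSet.Vert X) (e : x ⟶ x) (he : (e.1 : X _⦋1⦌) = X.σ 0 x) :
      SSet.FundRel X e.toPath (𝟙 ((Paths.of _).obj x))
  /-- The relation coming from a 2-simplex. -/
  | comp (x y z : SSet.Vert X) (e : x ⟶ y) (f : y ⟶ z) (g : x ⟶ z)
      (s : X _⦋2⦌) (h₂ : X.δ 2 s = e.1) (h₀ : X.δ 0 s = f.1) (h₁ : X.δ 1 s = g.1) :
      SSet.FundRel X (e.toPath ≫ f.toPath) g.toPath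

def SSet.FundCat (X : SSet.{u}) : Type u := CategoryTheory.Quotient (SSet.FundRel X)

noncomputable instance (X : SSet.{u}) : Category.{u} (SSet.FundCat X) :=
  inferInstanceAs (Category (CategoryTheory.Quotient (SSet.FundRel X)))

def SSet.tau0 (X : SSet.{u}) : Type u :=
  Quotient (CategoryTheory.isIsomorphicSetoid (SSet.FundCat X))

/-- The image of an edge under a map of simplicial sets, as an edge between the
image vertices. -/
noncomputable def SSet.edgeImage {S T : SSet.{u}} (h : S ⟶ T) {x y : SSet.Vert S}
    (e : x ⟶ y) :
    (show SSet.Vert T from h.app (op (SimplexCategory.mk 0)) x) ⟶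
      (show SSet.Vert T from h.app (op (SimplexCategory.mk 0)) y) :=
  ⟨h.app (op (SimplexCategory.mk 1)) e.1,
    (NatTrans.naturality_apply h (SimplexCategory.δ (1 : Fin 2)).op e.1).symm.trans
      (congrArg (h.app (op (SimplexCategory.mk 0))) e.2.1),
    (NatTrans.naturality_apply h (SimplexCategory.δ (0 : Fin 2)).op e.1).symm.trans
      (congrArg (h.app (op (SimplexCategory.mk 0))) e.2.2)⟩

/-- The prefunctor on quivers of vertices and edges induced by a map of
simplicial sets. -/
noncomputable def SSet.vertPrefunctor {S T : SSet.{u}} (h : S ⟶ T) :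
    SSet.Vert S ⥤q SSet.Vert T where
  obj x := h.app (op (SimplexCategory.mk 0)) x
  map e := SSet.edgeImage h e

/-- The functor on path categories induced by a map of simplicial sets. -/
noncomputable def SSet.pathsFunctor {S T : SSet.{u}} (h : S ⟶ T) :
    Paths (SSet.Vert S) ⥤ Paths (SSet.Vert T) where
  obj x := (SSet.vertPrefunctor h).obj x
  map p := (SSet.vertPrefunctor h).mapPath p
  map_id _ := rfl
  map_comp p q := (SSet.vertPrefunctor h).mapPath_comp p q

/-- The functor `τ(S) ⥤ τ(T)` induced by a map of simplicial sets. -/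
noncomputable def SSet.mapFund {S T : SSet.{u}} (h : S ⟶ T) :
    SSet.FundCat S ⥤ SSet.FundCat T := by
  refine CategoryTheory.Quotient.lift _
    (SSet.pathsFunctor h ⋙ CategoryTheory.Quotient.functor (SSet.FundRel T)) ?_
  rintro x y f g (⟨x, e, he⟩ | ⟨x, y, z, e, f', g', s, h₂, h₀, h₁⟩)
  · refine (CategoryTheory.Quotient.sound _
      (SSet.FundRel.degen _ (SSet.edgeImage h e) ?_)).trans
        (CategoryTheory.Functor.map_id _ _)
    show h.app (op (SimplexCategory.mk 1)) e.1 = T.σ 0 _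
    rw [he]
    exact NatTrans.naturality_apply h (SimplexCategory.σ (0 : Fin 1)).op x
  · exact CategoryTheory.Quotient.sound _
      (SSet.FundRel.comp _ _ _ (SSet.edgeImage h e) (SSet.edgeImage h f')
        (SSet.edgeImage h g') (h.app (op (SimplexCategory.mk 2)) s)
        ((NatTrans.naturality_apply h (SimplexCategory.δ (2 : Fin 3)).op s).symm.trans
          (congrArg (h.app (op (SimplexCategory.mk 1))) h₂))
        ((NatTrans.naturality_apply h (SimplexCategory.δ (0 : Fin 3)).op s).symm.trans
          (congrArg (h.app (op (SimplexCategory.mk 1))) h₀))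
        ((NatTrans.naturality_apply h (SimplexCategory.δ (1 : Fin 3)).op s).symm.trans
          (congrArg (h.app (op (SimplexCategory.mk 1))) h₁)))

/-- The induced map `τ₀(S) → τ₀(T)`. -/
noncomputable def SSet.tau0Map {S T : SSet.{u}} (h : S ⟶ T) :
    SSet.tau0 S → SSet.tau0 T :=
  Quotient.map (SSet.mapFund h).obj
    (fun _ _ r => by obtain ⟨i⟩ := r; exact ⟨(SSet.mapFund h).mapIso i⟩)

/-- The object of the fundamental category `τ(X)` determined by a vertex. -/
def SSet.tauObj (X : SSet.{u}) (v : X _⦋0⦌) : SSet.FundCat X :=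
  ⟨(v : Paths (SSet.Vert X))⟩

open MonoidalCategory in
/-- The internal hom simplicial set `B^A`: its `n`-simplices are the maps
`Δⁿ ⊗ A ⟶ B`. -/
@[simps]
noncomputable def SSet.sHom (A B : SSet.{u}) : SSet.{u} where
  obj n := SSet.stdSimplex.obj n.unop ⊗ A ⟶ B
  map f := TypeCat.ofHom (fun g => (SSet.stdSimplex.map f.unop ▷ A) ≫ g)
  map_id n := by apply ConcreteCategory.hom_ext; intro g; erw [CategoryTheory.Functor.map_id]; simp
  map_comp f g := by apply ConcreteCategory.hom_ext; intro h; erw [CategoryTheory.Functor.map_comp]; simp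

/-- The vertex of the internal hom `B^A` corresponding to a map `A ⟶ B`. -/
noncomputable def SSet.vertexOf {A B : SSet.{u}} (f : A ⟶ B) :
    (SSet.sHom A B) _⦋0⦌ :=
  CartesianMonoidalCategory.snd (SSet.stdSimplex.obj (SimplexCategory.mk 0)) A ≫ f

/-- Two maps of simplicial sets `f g : A ⟶ B` have the same class in
`τ₀(B^A)` if the corresponding vertices of the internal hom `B^A` are
isomorphic objects of its fundamental category. -/
noncomputable def SSet.THomotopic {A B : SSet.{u}} (f g : A ⟶ B) : Prop :=
  Nonempty (SSet.tauObj (SSet.sHom A B) (SSet.vertexOf f) ≅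
    SSet.tauObj (SSet.sHom A B) (SSet.vertexOf g))

/-- A map of simplicial sets is a *categorical equivalence* if its image in the
category `sSet^{τ₀}` is an isomorphism: it admits an inverse up to
`τ₀`-equivalence. -/
noncomputable def SSet.CatEquiv {A B : SSet.{u}} (u : A ⟶ B) : Prop :=
  ∃ v : B ⟶ A, SSet.THomotopic (u ≫ v) (𝟙 A) ∧ SSet.THomotopic (v ≫ u) (𝟙 B)

open MonoidalCategory in
/-- Precomposition with `u : A ⟶ B` as a map of internal homs `X^B ⟶ X^A`. -/
noncomputable def SSet.precompHom {A B : SSet.{u}} (u : A ⟶ B) (X : SSet.{u}) :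
    SSet.sHom B X ⟶ SSet.sHom A X where
  app n := TypeCat.ofHom (fun g => (SSet.stdSimplex.obj n.unop ◁ u) ≫ g)
  naturality n m f := by
    apply ConcreteCategory.hom_ext; intro g
    change (SSet.stdSimplex.obj m.unop ◁ u) ≫ (SSet.stdSimplex.map f.unop ▷ B) ≫ g =
      (SSet.stdSimplex.map f.unop ▷ A) ≫ (SSet.stdSimplex.obj n.unop ◁ u) ≫ g
    exact whisker_exchange_assoc _ _ _

/-- A map `u : A ⟶ B` of simplicial sets is a *weak categorical equivalence* if
for every simplicial set `X` the induced map
`sSet^{τ₀}(B, X) = τ₀(X^B) ⟶ τ₀(X^A) = sSet^{τ₀}(A, X)` is a bijection. -/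
noncomputable def SSet.WeakCatEquiv {A B : SSet.{u}} (u : A ⟶ B) : Prop :=
  ∀ X : SSet.{u}, Function.Bijective (SSet.tau0Map (SSet.precompHom u X))

/-!
Let `f ~ g` mean that `f, g : A ⟶ B` have the same class in `τ₀(B^A)`. Pre- and
postcomposition are maps of internal homs and `τ` is functorial, so `~` is a congruence and
`sSet^{τ₀}` is the quotient category `sSet/~`. Every vertex of `X^B` is a map `B ⟶ X`, so
`τ₀(X^B)` is the hom-set `sSet^{τ₀}(B, X)`, and precomposition with `f` on `τ₀(X^B)` is
composition with the class of `f`.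
Both sides of the equivalence thus say that the class of `f` is an isomorphism in `sSet^{τ₀}`,
once directly and once through the co-Yoneda criterion.
-/

namespace SSet

open CartesianMonoidalCategory

variable {A B C X : SSet.{u}}

variable (A B) in
noncomputable def vertexEquiv : (A ⟶ B) ≃ (sHom A B) _⦋0⦌ where
  toFun := vertexOf
  invFun h := lift (stdSimplex.isTerminalObj₀.from A) (𝟙 A) ≫ h
  left_inv f := by simp [vertexOf]
  right_inv h := by
    have : snd Δ[0] A ≫ lift (stdSimplex.isTerminalObj₀.from A) (𝟙 A) = 𝟙 _ :=
      CartesianMonoidalCategory.hom_ext _ _ stdSimplex.ext₀ (by simp)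
    change (snd Δ[0] A ≫ lift _ _) ≫ h = h
    rw [this]
    exact Category.id_comp h

variable (A) in
noncomputable def postcompHom (k : B ⟶ C) : sHom A B ⟶ sHom A C where
  app n := TypeCat.ofHom (fun g => g ≫ k)
  naturality n m f := by
    apply ConcreteCategory.hom_ext; intro g
    exact Category.assoc _ g k

lemma postcompHom_app_vertexOf (k : B ⟶ C) (g : A ⟶ B) :
    (postcompHom A k).app _ (vertexOf g) = vertexOf (g ≫ k) :=
  Category.assoc _ g k

lemma precompHom_app_vertexOf (f : A ⟶ B) (w : B ⟶ X) :
    (precompHom f X).app _ (vertexOf w) = vertexOf (f ≫ w) :=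
  (whiskerLeft_snd_assoc _ f w).trans (Category.assoc _ _ _).symm

lemma nonempty_tauObj_iso_app (φ : A ⟶ B) {v w : A _⦋0⦌}
    (h : Nonempty (tauObj A v ≅ tauObj A w)) :
    Nonempty (tauObj B (φ.app _ v) ≅ tauObj B (φ.app _ w)) :=
  h.map (mapFund φ).mapIso

namespace THomotopic

lemma refl (f : A ⟶ B) : THomotopic f f := ⟨Iso.refl _⟩

lemma symm {f g : A ⟶ B} (h : THomotopic f g) : THomotopic g f := h.map Iso.symm

lemma trans {f g h : A ⟶ B} (hfg : THomotopic f g) (hgh : THomotopic g h) :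
    THomotopic f h :=
  let ⟨i⟩ := hfg; let ⟨j⟩ := hgh; ⟨i ≪≫ j⟩

lemma comp_left (f : A ⟶ B) {g g' : B ⟶ C} (h : THomotopic g g') :
    THomotopic (f ≫ g) (f ≫ g') := by
  simpa only [THomotopic, precompHom_app_vertexOf] using
    nonempty_tauObj_iso_app (precompHom f C) h

lemma comp_right {f f' : A ⟶ B} (g : B ⟶ C) (h : THomotopic f f') :
    THomotopic (f ≫ g) (f' ≫ g) := by
  simpa only [THomotopic, postcompHom_app_vertexOf] using
    nonempty_tauObj_iso_app (postcompHom A g) h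

end THomotopic

def thomotopicRel : HomRel SSet.{u} := fun _ _ f g => THomotopic f g

instance : Congruence thomotopicRel.{u} where
  equivalence := ⟨THomotopic.refl, THomotopic.symm, THomotopic.trans⟩
  comp_left f := THomotopic.comp_left f
  comp_right g := THomotopic.comp_right g

/-- The category `sSet^{τ₀}`, realised as a quotient of `SSet`. -/
abbrev Tau0Cat : Type (u + 1) := CategoryTheory.Quotient thomotopicRel.{u}

abbrev toTau0Cat : SSet.{u} ⥤ Tau0Cat.{u} := Quotient.functor thomotopicRel

lemma toTau0Cat_map_eq_iff (f g : A ⟶ B) :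
    toTau0Cat.map f = toTau0Cat.map g ↔ THomotopic f g :=
  Quotient.functor_map_eq_iff _ f g

lemma toTau0Cat_map_comp_eq_id_iff (f : A ⟶ B) (g : B ⟶ A) :
    toTau0Cat.map f ≫ toTau0Cat.map g = 𝟙 _ ↔ THomotopic (f ≫ g) (𝟙 A) := by
  rw [← toTau0Cat.map_comp, ← toTau0Cat.map_id, toTau0Cat_map_eq_iff]

lemma catEquiv_iff_isIso (f : A ⟶ B) : CatEquiv f ↔ IsIso (toTau0Cat.map f) := by
  constructor
  · rintro ⟨v, hfv, hvf⟩
    exact ⟨toTau0Cat.map v, (toTau0Cat_map_comp_eq_id_iff f v).2 hfv,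
      (toTau0Cat_map_comp_eq_id_iff v f).2 hvf⟩
  · intro hf
    obtain ⟨v, hv⟩ := toTau0Cat.map_surjective (inv (toTau0Cat.map f))
    exact ⟨v, (toTau0Cat_map_comp_eq_id_iff f v).1 (by simp [hv]),
      (toTau0Cat_map_comp_eq_id_iff v f).1 (by simp [hv])⟩

variable (A B) in
noncomputable def fundCatObjEquiv : (A ⟶ B) ≃ FundCat (sHom A B) where
  toFun g := tauObj _ (vertexOf g)
  invFun c := (vertexEquiv A B).symm c.as
  left_inv := (vertexEquiv A B).left_inv
  right_inv c := congrArg (tauObj _) ((vertexEquiv A B).apply_symm_apply c.as)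

variable (A B) in
noncomputable def tau0HomEquiv : tau0 (sHom A B) ≃ (toTau0Cat.obj A ⟶ toTau0Cat.obj B) :=
  Quot.congr (fundCatObjEquiv A B).symm fun c d => by
    obtain ⟨f, rfl⟩ := (fundCatObjEquiv A B).surjective c
    obtain ⟨g, rfl⟩ := (fundCatObjEquiv A B).surjective d
    rw [Equiv.symm_apply_apply, Equiv.symm_apply_apply, HomRel.compClosure_iff_self]
    rfl

lemma tau0HomEquiv_mk (g : A ⟶ B) :
    tau0HomEquiv A B (Quotient.mk _ (fundCatObjEquiv A B g)) = toTau0Cat.map g :=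
  congrArg (Quot.mk _) ((fundCatObjEquiv A B).symm_apply_apply g)

lemma tau0Map_precompHom_mk (f : A ⟶ B) (w : B ⟶ X) :
    tau0Map (precompHom f X) (Quotient.mk _ (fundCatObjEquiv B X w)) =
      Quotient.mk _ (fundCatObjEquiv A X (f ≫ w)) :=
  congrArg (fun v => Quotient.mk _ (tauObj _ v)) (precompHom_app_vertexOf f w)

lemma tau0HomEquiv_tau0Map_precompHom (f : A ⟶ B) (c : tau0 (sHom B X)) :
    tau0HomEquiv A X (tau0Map (precompHom f X) c) =
      toTau0Cat.map f ≫ tau0HomEquiv B X c := by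
  obtain ⟨c, rfl⟩ := Quotient.exists_rep c
  obtain ⟨w, rfl⟩ := (fundCatObjEquiv B X).surjective c
  rw [tau0Map_precompHom_mk, tau0HomEquiv_mk, tau0HomEquiv_mk, Functor.map_comp]

lemma bijective_tau0Map_precompHom_iff (f : A ⟶ B) :
    Function.Bijective (tau0Map (precompHom f X)) ↔
      Function.Bijective fun g : toTau0Cat.obj B ⟶ toTau0Cat.obj X => toTau0Cat.map f ≫ g := by
  have : tau0HomEquiv A X ∘ tau0Map (precompHom f X) =
      (fun g => toTau0Cat.map f ≫ g) ∘ tau0HomEquiv B X :=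
    funext (tau0HomEquiv_tau0Map_precompHom f)
  rw [← Equiv.comp_bijective _ (tau0HomEquiv A X), this, Equiv.bijective_comp]

lemma weakCatEquiv_iff_bijective_comp (f : A ⟶ B) :
    WeakCatEquiv f ↔
      ∀ Y : Tau0Cat.{u},
        Function.Bijective fun g : toTau0Cat.obj B ⟶ Y => toTau0Cat.map f ≫ g :=
  ⟨fun h Y => (bijective_tau0Map_precompHom_iff f).1 (h Y.as),
    fun h _ => (bijective_tau0Map_precompHom_iff f).2 (h _)⟩

lemma catEquiv_iff_weakCatEquiv (f : A ⟶ B) : CatEquiv f ↔ WeakCatEquiv f := by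
  rw [catEquiv_iff_isIso, weakCatEquiv_iff_bijective_comp, isIso_iff_coyoneda_map_bijective]

end SSet

/-- For a map `f : A ⟶ B` between quasi-categories, `f` is a categorical
equivalence if and only if it is a weak categorical equivalence; and any
categorical equivalence between arbitrary simplicial sets is a weak categorical
equivalence. -/
theorem catEquiv_iff_weakCatEquiv
    (A B : SSet.{u}) (f : A ⟶ B) :
    (SSet.CatEquiv f ↔ SSet.WeakCatEquiv f) ∧
    (∀ (A' B' : SSet.{u}) (g : A' ⟶ B'), SSet.CatEquiv g → SSet.WeakCatEquiv g) :=
  ⟨SSet.catEquiv_iff_weakCatEquiv f,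
    fun _ _ g => (SSet.catEquiv_iff_weakCatEquiv g).1⟩
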